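/- arXiv:1711.00342 — 5 statements merged into one kernel-verified Lean document; each statement's English description precedes it below -/
import Mathlib

section
/- In the partially linear regression model Y = θ₀T + f₀(X) + ε, T = g₀(X) + η, with E[ε | X, T] = 0 a.s. and E[η | X] = 0 a.s., the moment function m(Z, θ, q, g, μ) = (Y − q − θ(T − g)) · ((T − g)^r − E[η^r | X] − r(T − g)μ), evaluated at θ = θ₀, q = q₀(X) := f₀(X) + θ₀ g₀(X), g = g₀(X), μ = E[η^{r−1} | X], has conditional expectation zero given X. -/
open MeasureTheory ProbabilityTheory Filter

/-!
Writing `η = T − g₀(X)` and `ε = Y − θ₀T − f₀(X)`, the moment factors as `W · ε`, where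
the weight `W = η^r − E[η^r | X] − r η E[η^(r−1) | X]` is a function of `(X, T)`.
Since `σ(X) ⊆ σ(X, T)`, the tower property and pulling `W` out give
`E[W ε | X] = E[W E[ε | X, T] | X] = 0`.
-/

theorem condExp_mul_ae_eq_zero_of_condExp_ae_eq_zero {Ω : Type*} {m m' m₀ : MeasurableSpace Ω}
    {μ : Measure[m₀] Ω} {W ε : Ω → ℝ} (hmm' : m ≤ m') (hm' : m' ≤ m₀)
    [SigmaFinite (μ.trim hm')] (hW : StronglyMeasurable[m'] W) (hε : Integrable ε μ)
    (hεcond : μ[ε | m'] =ᵐ[μ] 0) :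
    μ[W * ε | m] =ᵐ[μ] 0 := by
  by_cases hWε : Integrable (W * ε) μ
  · have hinner : μ[W * ε | m'] =ᵐ[μ] 0 := by
      filter_upwards [condExp_mul_of_stronglyMeasurable_left hW hWε hε, hεcond] with ω hpull hω
      simp [hpull, hω]
    calc μ[W * ε | m] =ᵐ[μ] μ[μ[W * ε | m'] | m] := (condExp_condExp_of_le hmm' hm').symm
      _ =ᵐ[μ] μ[(0 : Ω → ℝ) | m] := condExp_congr_ae hinner
      _ = 0 := condExp_zero
  · rw [condExp_of_not_integrable hWε]

theorem stmt6_general {Ω β : Type*} [MeasurableSpace Ω] [MeasurableSpace β]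
    (μ : Measure Ω) [IsProbabilityMeasure μ]
    (X : Ω → β) (T Y : Ω → ℝ) (hX : Measurable X) (hT : Measurable T)
    (f₀ g₀ : β → ℝ) (hg₀ : Measurable g₀)
    (θ₀ : ℝ) (r : ℕ)
    (hεcond : μ[fun ω => Y ω - θ₀ * T ω - f₀ (X ω)
        | MeasurableSpace.comap (fun ω => (X ω, T ω)) inferInstance] =ᵐ[μ] 0)
    (hmix : ∀ k : ℕ, Integrable (fun ω => (Y ω - θ₀ * T ω - f₀ (X ω)) * (T ω - g₀ (X ω)) ^ k) μ) :
    μ[fun ω =>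
        (Y ω - (f₀ (X ω) + θ₀ * g₀ (X ω)) - θ₀ * (T ω - g₀ (X ω))) *
          ((T ω - g₀ (X ω)) ^ r
            - (μ[fun ω' => (T ω' - g₀ (X ω')) ^ r | MeasurableSpace.comap X inferInstance]) ω
            - (r : ℝ) * (T ω - g₀ (X ω)) *
              (μ[fun ω' => (T ω' - g₀ (X ω')) ^ (r - 1)
                  | MeasurableSpace.comap X inferInstance]) ω)
      | MeasurableSpace.comap X inferInstance] =ᵐ[μ] 0 := by
  set mX : MeasurableSpace Ω := MeasurableSpace.comap X inferInstance
  set mXT : MeasurableSpace Ω := MeasurableSpace.comap (fun ω => (X ω, T ω)) inferInstance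
  have hpair : Measurable[mXT] (fun ω => (X ω, T ω)) := measurable_iff_comap_le.mpr le_rfl
  have hmX_le : mX ≤ mXT := (measurable_fst.comp hpair).comap_le
  have hη : Measurable[mXT] (fun ω => T ω - g₀ (X ω)) :=
    (measurable_snd.comp hpair).sub (hg₀.comp (measurable_fst.comp hpair))
  convert condExp_mul_ae_eq_zero_of_condExp_ae_eq_zero (ε := fun ω => Y ω - θ₀ * T ω - f₀ (X ω))
      (W := fun ω => (T ω - g₀ (X ω)) ^ r - μ[fun ω' => (T ω' - g₀ (X ω')) ^ r | mX] ω
        - r * (T ω - g₀ (X ω)) * μ[fun ω' => (T ω' - g₀ (X ω')) ^ (r - 1) | mX] ω)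
      hmX_le (hX.prodMk hT).comap_le ?_ (by simpa using hmix 0) hεcond using 2
  · funext ω
    simp only [Pi.mul_apply]
    ring
  · exact ((hη.pow_const r).stronglyMeasurable.sub (stronglyMeasurable_condExp.mono hmX_le)).sub
      ((measurable_const.mul hη).stronglyMeasurable.mul (stronglyMeasurable_condExp.mono hmX_le))

/-- In the partially linear regression model `Y = θ₀ T + f₀(X) + ε`, `T = g₀(X) + η`
with `E[ε | X, T] = 0` and `E[η | X] = 0` a.s., the moment
`m = (Y − q₀(X) − θ₀(T − g₀(X))) ((T − g₀(X))^r − E[η^r|X] − r (T − g₀(X)) E[η^(r−1)|X])`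
(where `q₀ = f₀ + θ₀ g₀` and `η = T − g₀(X)`) has conditional expectation zero given `X`. -/
theorem stmt6 {Ω β : Type*} [MeasurableSpace Ω] [MeasurableSpace β]
    (μ : Measure Ω) [IsProbabilityMeasure μ]
    (X : Ω → β) (T Y : Ω → ℝ) (hX : Measurable X) (hT : Measurable T) (hY : Measurable Y)
    (f₀ g₀ : β → ℝ) (hf₀ : Measurable f₀) (hg₀ : Measurable g₀)
    (θ₀ : ℝ) (r : ℕ) (hr : 0 < r)
    (hεcond : μ[fun ω => Y ω - θ₀ * T ω - f₀ (X ω)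
        | MeasurableSpace.comap (fun ω => (X ω, T ω)) inferInstance] =ᵐ[μ] 0)
    (hηcond : μ[fun ω => T ω - g₀ (X ω) | MeasurableSpace.comap X inferInstance] =ᵐ[μ] 0)
    (hmom : ∀ k : ℕ, Integrable (fun ω => (T ω - g₀ (X ω)) ^ k) μ)
    (hmix : ∀ k : ℕ, Integrable (fun ω => (Y ω - θ₀ * T ω - f₀ (X ω)) * (T ω - g₀ (X ω)) ^ k) μ) :
    μ[fun ω =>
        (Y ω - (f₀ (X ω) + θ₀ * g₀ (X ω)) - θ₀ * (T ω - g₀ (X ω))) *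
          ((T ω - g₀ (X ω)) ^ r
            - (μ[fun ω' => (T ω' - g₀ (X ω')) ^ r | MeasurableSpace.comap X inferInstance]) ω
            - (r : ℝ) * (T ω - g₀ (X ω)) *
              (μ[fun ω' => (T ω' - g₀ (X ω')) ^ (r - 1)
                  | MeasurableSpace.comap X inferInstance]) ω)
      | MeasurableSpace.comap X inferInstance] =ᵐ[μ] 0 :=
  stmt6_general μ X T Y hX hT f₀ g₀ hg₀ θ₀ r hεcond hmix
end

section
/- In the partially linear regression model with q₀ = f₀ + θ₀g₀, the gradient in θ of the moment m(Z, θ, q₀(X), g₀(X), E[η^{r−1}|X]) = (Y − q₀(X) − θ(T − g₀(X)))·((T − g₀(X))^r − E[η^r|X] − r(T − g₀(X))E[η^{r−1}|X]) at θ = θ₀ has expectation equal to −E[E[η^{r+1}|X] − r·E[η²|X]·E[η^{r−1}|X]]; in particular it is nonzero whenever E[η^{r+1}] ≠ r·E[E[η²|X]E[η^{r−1}|X]]. -/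
/-!
Write `η = T - g₀(X)` and `A k = E[η^k | X]`. Expanding the product, the integrand is
`A r · η + r · A (r-1) · η² - η^(r+1)`. Since `A r` and `A (r-1)` are `X`-measurable they can be
pulled through a conditional expectation: `E[A r · η] = E[A r · E[η | X]] = 0` and
`E[A (r-1) · η²] = E[A (r-1) · A 2]`. All products are integrable because every power of `η` is
square integrable, hence so is every `A k`.
-/

open MeasureTheory

namespace MeasureTheory

variable {Ω : Type*} {m m0 : MeasurableSpace Ω} {μ : Measure Ω}

lemma memLp_two_pow_of_integrable_pow {η : Ω → ℝ}
    (hmom : ∀ k : ℕ, Integrable (fun ω => η ω ^ k) μ) (k : ℕ) :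
    MemLp (fun ω => η ω ^ k) 2 μ := by
  refine (memLp_two_iff_integrable_sq ((hmom k).aestronglyMeasurable)).mpr ?_
  simpa only [← pow_mul] using hmom (k * 2)

lemma integral_mul_eq_integral_mul_condExp (hm : m ≤ m0) [SigmaFinite (μ.trim hm)]
    {f g : Ω → ℝ} (hf : AEStronglyMeasurable[m] f μ)
    (hfg : Integrable (fun ω => f ω * g ω) μ) (hg : Integrable g μ) :
    ∫ ω, f ω * g ω ∂μ = ∫ ω, f ω * μ[g | m] ω ∂μ :=
  (integral_condExp hm).symm.trans
    (integral_congr_ae (condExp_mul_of_aestronglyMeasurable_left hf hfg hg))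

theorem integral_neg_mul_pow_sub_condExp_eq (hm : m ≤ m0) [SigmaFinite (μ.trim hm)]
    {η : Ω → ℝ} (r : ℕ) (hmom : ∀ k : ℕ, Integrable (fun ω => η ω ^ k) μ)
    (hηcond : μ[η | m] =ᵐ[μ] 0) :
    ∫ ω, -η ω * (η ω ^ r - μ[fun ω' => η ω' ^ r | m] ω
        - r * η ω * μ[fun ω' => η ω' ^ (r - 1) | m] ω) ∂μ
      = -(∫ ω, η ω ^ (r + 1) ∂μ
          - r * ∫ ω, μ[fun ω' => η ω' ^ 2 | m] ω * μ[fun ω' => η ω' ^ (r - 1) | m] ω ∂μ) := by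
  set A : ℕ → Ω → ℝ := fun k => μ[fun ω' => η ω' ^ k | m]
  have hη : Integrable η μ := by simpa using hmom 1
  have hA : ∀ k, MemLp (A k) 2 μ := fun k =>
    (memLp_two_pow_of_integrable_pow hmom k).condExp one_le_two
  have hAη : Integrable (fun ω => A r ω * η ω) μ :=
    (hA r).integrable_mul (by simpa using memLp_two_pow_of_integrable_pow hmom 1)
  have hAη2 : Integrable (fun ω => A (r - 1) ω * η ω ^ 2) μ :=
    (hA (r - 1)).integrable_mul (memLp_two_pow_of_integrable_pow hmom 2)
  have hA_meas : ∀ k, AEStronglyMeasurable[m] (A k) μ := fun k =>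
    stronglyMeasurable_condExp.aestronglyMeasurable
  have hcross : ∫ ω, A r ω * η ω ∂μ = 0 := by
    rw [integral_mul_eq_integral_mul_condExp hm (hA_meas r) hAη hη]
    refine integral_eq_zero_of_ae ?_
    filter_upwards [hηcond] with ω hω
    simp [hω]
  have hsquare : ∫ ω, A (r - 1) ω * η ω ^ 2 ∂μ = ∫ ω, A 2 ω * A (r - 1) ω ∂μ := by
    rw [integral_mul_eq_integral_mul_condExp hm (hA_meas (r - 1)) hAη2 (hmom 2)]
    simp only [mul_comm (A (r - 1) _)]
    rfl
  have hsum : Integrable (fun ω => A r ω * η ω + r * (A (r - 1) ω * η ω ^ 2)) μ :=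
    hAη.add (hAη2.const_mul _)
  calc _ = ∫ ω, A r ω * η ω + r * (A (r - 1) ω * η ω ^ 2) - η ω ^ (r + 1) ∂μ :=
        integral_congr_ae (ae_of_all _ fun ω => by ring)
    _ = _ := by
      rw [integral_sub hsum (hmom _),
        integral_add hAη (hAη2.const_mul _), integral_const_mul, hcross, hsquare]
      ring

end MeasureTheory

theorem stmt7_general {Ω β : Type*} [MeasurableSpace Ω] [MeasurableSpace β]
    (μ : Measure Ω) [IsProbabilityMeasure μ]
    (X : Ω → β) (T : Ω → ℝ) (hX : Measurable X)
    (g₀ : β → ℝ) (r : ℕ)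
    (hηcond : μ[fun ω => T ω - g₀ (X ω) | MeasurableSpace.comap X inferInstance] =ᵐ[μ] 0)
    (hmom : ∀ k : ℕ, Integrable (fun ω => (T ω - g₀ (X ω)) ^ k) μ)
    (hmixmom : Integrable (fun ω =>
        (μ[fun ω' => (T ω' - g₀ (X ω')) ^ 2 | MeasurableSpace.comap X inferInstance]) ω *
        (μ[fun ω' => (T ω' - g₀ (X ω')) ^ (r - 1)
            | MeasurableSpace.comap X inferInstance]) ω) μ) :
    (∫ ω, -(T ω - g₀ (X ω)) *
        ((T ω - g₀ (X ω)) ^ r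
          - (μ[fun ω' => (T ω' - g₀ (X ω')) ^ r | MeasurableSpace.comap X inferInstance]) ω
          - (r : ℝ) * (T ω - g₀ (X ω)) *
            (μ[fun ω' => (T ω' - g₀ (X ω')) ^ (r - 1)
                | MeasurableSpace.comap X inferInstance]) ω) ∂μ
      = - ∫ ω,
          ((μ[fun ω' => (T ω' - g₀ (X ω')) ^ (r + 1) | MeasurableSpace.comap X inferInstance]) ω
            - (r : ℝ) *
              ((μ[fun ω' => (T ω' - g₀ (X ω')) ^ 2 | MeasurableSpace.comap X inferInstance]) ω *
               (μ[fun ω' => (T ω' - g₀ (X ω')) ^ (r - 1)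
                  | MeasurableSpace.comap X inferInstance]) ω)) ∂μ)
    ∧ ((∫ ω, (T ω - g₀ (X ω)) ^ (r + 1) ∂μ ≠
          (r : ℝ) * ∫ ω,
            (μ[fun ω' => (T ω' - g₀ (X ω')) ^ 2 | MeasurableSpace.comap X inferInstance]) ω *
            (μ[fun ω' => (T ω' - g₀ (X ω')) ^ (r - 1)
                | MeasurableSpace.comap X inferInstance]) ω ∂μ) →
        (∫ ω, -(T ω - g₀ (X ω)) *
          ((T ω - g₀ (X ω)) ^ r
            - (μ[fun ω' => (T ω' - g₀ (X ω')) ^ r | MeasurableSpace.comap X inferInstance]) ω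
            - (r : ℝ) * (T ω - g₀ (X ω)) *
              (μ[fun ω' => (T ω' - g₀ (X ω')) ^ (r - 1)
                  | MeasurableSpace.comap X inferInstance]) ω) ∂μ) ≠ 0) := by
  have hm : MeasurableSpace.comap X inferInstance ≤ ‹MeasurableSpace Ω› := hX.comap_le
  have key := integral_neg_mul_pow_sub_condExp_eq hm (η := fun ω => T ω - g₀ (X ω)) r hmom hηcond
  beta_reduce at key
  refine ⟨?_, fun hne h0 => hne ?_⟩
  · rw [key, integral_sub integrable_condExp (hmixmom.const_mul _), integral_const_mul,
      integral_condExp hm]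
  · rw [key] at h0
    linarith

/-- In the PLR model, the `θ`-gradient of the moment of the 2-orthogonal construction,
which equals `−(T − g₀(X)) ((T − g₀(X))^r − E[η^r|X] − r (T − g₀(X)) E[η^(r−1)|X])`,
has expectation `−E[E[η^(r+1)|X] − r E[η²|X] E[η^(r−1)|X]]`; in particular it is nonzero
whenever `E[η^(r+1)] ≠ r E[E[η²|X] E[η^(r−1)|X]]`. -/
theorem stmt7 {Ω β : Type*} [MeasurableSpace Ω] [MeasurableSpace β]
    (μ : Measure Ω) [IsProbabilityMeasure μ]
    (X : Ω → β) (T Y : Ω → ℝ) (hX : Measurable X) (hT : Measurable T) (hY : Measurable Y)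
    (f₀ g₀ : β → ℝ) (hf₀ : Measurable f₀) (hg₀ : Measurable g₀)
    (θ₀ : ℝ) (r : ℕ) (hr : 0 < r)
    (hεcond : μ[fun ω => Y ω - θ₀ * T ω - f₀ (X ω)
        | MeasurableSpace.comap (fun ω => (X ω, T ω)) inferInstance] =ᵐ[μ] 0)
    (hηcond : μ[fun ω => T ω - g₀ (X ω) | MeasurableSpace.comap X inferInstance] =ᵐ[μ] 0)
    (hmom : ∀ k : ℕ, Integrable (fun ω => (T ω - g₀ (X ω)) ^ k) μ)
    (hmixmom : Integrable (fun ω =>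
        (μ[fun ω' => (T ω' - g₀ (X ω')) ^ 2 | MeasurableSpace.comap X inferInstance]) ω *
        (μ[fun ω' => (T ω' - g₀ (X ω')) ^ (r - 1)
            | MeasurableSpace.comap X inferInstance]) ω) μ) :
    (∫ ω, -(T ω - g₀ (X ω)) *
        ((T ω - g₀ (X ω)) ^ r
          - (μ[fun ω' => (T ω' - g₀ (X ω')) ^ r | MeasurableSpace.comap X inferInstance]) ω
          - (r : ℝ) * (T ω - g₀ (X ω)) *
            (μ[fun ω' => (T ω' - g₀ (X ω')) ^ (r - 1)
                | MeasurableSpace.comap X inferInstance]) ω) ∂μ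
      = - ∫ ω,
          ((μ[fun ω' => (T ω' - g₀ (X ω')) ^ (r + 1) | MeasurableSpace.comap X inferInstance]) ω
            - (r : ℝ) *
              ((μ[fun ω' => (T ω' - g₀ (X ω')) ^ 2 | MeasurableSpace.comap X inferInstance]) ω *
               (μ[fun ω' => (T ω' - g₀ (X ω')) ^ (r - 1)
                  | MeasurableSpace.comap X inferInstance]) ω)) ∂μ)
    ∧ ((∫ ω, (T ω - g₀ (X ω)) ^ (r + 1) ∂μ ≠
          (r : ℝ) * ∫ ω,
            (μ[fun ω' => (T ω' - g₀ (X ω')) ^ 2 | MeasurableSpace.comap X inferInstance]) ω *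
            (μ[fun ω' => (T ω' - g₀ (X ω')) ^ (r - 1)
                | MeasurableSpace.comap X inferInstance]) ω ∂μ) →
        (∫ ω, -(T ω - g₀ (X ω)) *
          ((T ω - g₀ (X ω)) ^ r
            - (μ[fun ω' => (T ω' - g₀ (X ω')) ^ r | MeasurableSpace.comap X inferInstance]) ω
            - (r : ℝ) * (T ω - g₀ (X ω)) *
              (μ[fun ω' => (T ω' - g₀ (X ω')) ^ (r - 1)
                  | MeasurableSpace.comap X inferInstance]) ω) ∂μ) ≠ 0) :=
  stmt7_general μ X T hX g₀ r hηcond hmom hmixmom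
end

section
/- In the partially linear regression model, the moment m(Z, θ, q, g, μ) = (Y − q − θ(T − g))·((T − g)^r − E[η^r|X] − r(T − g)μ) satisfies first-order orthogonality: the conditional expectations given X of the partial derivatives of m with respect to q, g, and μ, evaluated at (θ₀, q₀(X), g₀(X), E[η^{r−1}|X]), are all zero almost surely. -/
/-!
Each partial derivative splits into terms of two kinds. Terms `h · ε` with `h` a function of
`(X, T)` have zero conditional mean given `X`, because `E[ε | X, T] = 0` lets one pull `h` out
and the tower property then passes to `σ(X)`. The remaining terms are `η^r − E[η^r | X]` and
`E[η^(r−1) | X] · η`, which are centred given `X` by construction and by `E[η | X] = 0`.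
Where a product such as `E[η^(r−1) | X] · η` fails to be integrable, so does the sum containing
it, and its conditional expectation is `0` by convention.
-/

open MeasureTheory ProbabilityTheory Filter

section CondExpZero

variable {Ω : Type*} {m m₀ : MeasurableSpace Ω} {μ : Measure Ω} {f g c : Ω → ℝ}

theorem condExp_add_ae_eq_zero (hf : Integrable f μ) (hf0 : μ[f|m] =ᵐ[μ] 0)
    (hg0 : μ[g|m] =ᵐ[μ] 0) : μ[f + g|m] =ᵐ[μ] 0 := by
  by_cases hg : Integrable g μ
  · filter_upwards [condExp_add hf hg m, hf0, hg0] with ω h hf0 hg0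
    simp [h, hf0, hg0]
  · rw [condExp_of_not_integrable fun hfg => hg (by simpa using hfg.sub hf)]

theorem condExp_smul_ae_eq_zero (a : ℝ) (hf0 : μ[f|m] =ᵐ[μ] 0) :
    μ[a • f|m] =ᵐ[μ] 0 := by
  filter_upwards [condExp_smul a f m, hf0] with ω h h0
  simp [h, h0]

theorem condExp_mul_ae_eq_zero_of_stronglyMeasurable_right (hc : StronglyMeasurable[m] c)
    (hf : Integrable f μ) (hf0 : μ[f|m] =ᵐ[μ] 0) : μ[f * c|m] =ᵐ[μ] 0 := by
  by_cases hfc : Integrable (f * c) μ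
  · filter_upwards [condExp_mul_of_stronglyMeasurable_right hc hfc hf, hf0] with ω h h0
    simp [h, h0]
  · rw [condExp_of_not_integrable hfc]

theorem condExp_ae_eq_zero_of_le {m₁ m₂ : MeasurableSpace Ω} (h₁₂ : m₁ ≤ m₂) (h₂ : m₂ ≤ m₀)
    [SigmaFinite (μ.trim h₂)] (hf0 : μ[f|m₂] =ᵐ[μ] 0) : μ[f|m₁] =ᵐ[μ] 0 :=
  calc μ[f|m₁] =ᵐ[μ] μ[μ[f|m₂]|m₁] := (condExp_condExp_of_le h₁₂ h₂).symm
    _ =ᵐ[μ] μ[0|m₁] := condExp_congr_ae hf0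
    _ = 0 := condExp_zero

theorem condExp_mul_ae_eq_zero_of_le {m₁ m₂ : MeasurableSpace Ω} (h₁₂ : m₁ ≤ m₂)
    (h₂ : m₂ ≤ m₀) [SigmaFinite (μ.trim h₂)] (hc : StronglyMeasurable[m₂] c)
    (hf : Integrable f μ) (hf0 : μ[f|m₂] =ᵐ[μ] 0) : μ[f * c|m₁] =ᵐ[μ] 0 :=
  condExp_ae_eq_zero_of_le h₁₂ h₂
    (condExp_mul_ae_eq_zero_of_stronglyMeasurable_right hc hf hf0)

theorem condExp_sub_condExp_ae_eq_zero (hm : m ≤ m₀) [SigmaFinite (μ.trim hm)]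
    (hf : Integrable f μ) : μ[f - μ[f|m]|m] =ᵐ[μ] 0 := by
  filter_upwards [condExp_sub hf (integrable_condExp : Integrable μ[f|m] μ) m,
    condExp_condExp_of_le (f := f) le_rfl hm] with ω h hidem
  simp [h, hidem]

end CondExpZero

theorem stmt8_general {Ω β : Type*} [MeasurableSpace Ω] [MeasurableSpace β]
    (μ : Measure Ω) [IsProbabilityMeasure μ]
    (X : Ω → β) (T Y : Ω → ℝ) (hX : Measurable X) (hT : Measurable T)
    (f₀ g₀ : β → ℝ) (hg₀ : Measurable g₀)
    (θ₀ : ℝ) (r : ℕ)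
    (hεcond : μ[fun ω => Y ω - θ₀ * T ω - f₀ (X ω)
        | MeasurableSpace.comap (fun ω => (X ω, T ω)) inferInstance] =ᵐ[μ] 0)
    (hηcond : μ[fun ω => T ω - g₀ (X ω) | MeasurableSpace.comap X inferInstance] =ᵐ[μ] 0)
    (hmom : ∀ k : ℕ, Integrable (fun ω => (T ω - g₀ (X ω)) ^ k) μ)
    (hmix : ∀ k : ℕ, Integrable (fun ω => (Y ω - θ₀ * T ω - f₀ (X ω)) * (T ω - g₀ (X ω)) ^ k) μ) :
    -- ∂m/∂q at the truth
    (μ[fun ω =>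
        -((T ω - g₀ (X ω)) ^ r
          - (μ[fun ω' => (T ω' - g₀ (X ω')) ^ r | MeasurableSpace.comap X inferInstance]) ω
          - (r : ℝ) * (T ω - g₀ (X ω)) *
            (μ[fun ω' => (T ω' - g₀ (X ω')) ^ (r - 1)
                | MeasurableSpace.comap X inferInstance]) ω)
      | MeasurableSpace.comap X inferInstance] =ᵐ[μ] 0)
    ∧
    -- ∂m/∂g at the truth
    (μ[fun ω =>
        θ₀ * ((T ω - g₀ (X ω)) ^ r
          - (μ[fun ω' => (T ω' - g₀ (X ω')) ^ r | MeasurableSpace.comap X inferInstance]) ω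
          - (r : ℝ) * (T ω - g₀ (X ω)) *
            (μ[fun ω' => (T ω' - g₀ (X ω')) ^ (r - 1)
                | MeasurableSpace.comap X inferInstance]) ω)
        + (Y ω - θ₀ * T ω - f₀ (X ω)) *
            (-(r : ℝ) * (T ω - g₀ (X ω)) ^ (r - 1)
              + (r : ℝ) *
                (μ[fun ω' => (T ω' - g₀ (X ω')) ^ (r - 1)
                    | MeasurableSpace.comap X inferInstance]) ω)
      | MeasurableSpace.comap X inferInstance] =ᵐ[μ] 0)
    ∧
    -- ∂m/∂μ at the truth
    (μ[fun ω =>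
        (Y ω - θ₀ * T ω - f₀ (X ω)) * (-(r : ℝ) * (T ω - g₀ (X ω)))
      | MeasurableSpace.comap X inferInstance] =ᵐ[μ] 0) := by
  have hmXT := (hX.prodMk hT).comap_le
  set mX := MeasurableSpace.comap X inferInstance
  set mXT := MeasurableSpace.comap (fun ω => (X ω, T ω)) inferInstance
  set ε : Ω → ℝ := fun ω => Y ω - θ₀ * T ω - f₀ (X ω) with hε_def
  set η : Ω → ℝ := fun ω => T ω - g₀ (X ω) with hη_def
  have hπ : Measurable[mXT] fun ω => (X ω, T ω) := comap_measurable _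
  have hmX_mXT : mX ≤ mXT := (measurable_fst.comp hπ).comap_le
  have hη_meas : Measurable[mXT] η :=
    (measurable_snd.comp hπ).sub ((hg₀.comp measurable_fst).comp hπ)
  have hε_int : Integrable ε μ := by simpa using hmix 0
  have hη_int : Integrable η μ := by simpa using hmom 1
  have hε_mul : ∀ h : Ω → ℝ, StronglyMeasurable[mXT] h → μ[ε * h|mX] =ᵐ[μ] 0 := fun _ hh =>
    condExp_mul_ae_eq_zero_of_le hmX_mXT hmXT hh hε_int hεcond
  have hcentred := condExp_sub_condExp_ae_eq_zero (hmX_mXT.trans hmXT) (hmom r)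
  have hc_meas : StronglyMeasurable[mX] ((r : ℝ) • μ[fun ω => η ω ^ (r - 1)|mX]) :=
    stronglyMeasurable_condExp.const_smul _
  refine ⟨?_, ?_, ?_⟩
  · refine (condExp_congr_ae (.of_forall fun ω => ?_)).trans <|
      condExp_add_ae_eq_zero (((hmom r).sub integrable_condExp).smul (-1 : ℝ))
        (condExp_smul_ae_eq_zero _ hcentred)
        (condExp_mul_ae_eq_zero_of_stronglyMeasurable_right hc_meas hη_int hηcond)
    simp only [hη_def, Pi.add_apply, Pi.sub_apply, Pi.mul_apply, Pi.smul_apply, smul_eq_mul]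
    ring
  · have hε_sub_η : μ[ε + (-θ₀) • η|mX] =ᵐ[μ] 0 :=
      condExp_add_ae_eq_zero hε_int (condExp_ae_eq_zero_of_le hmX_mXT hmXT hεcond)
        (condExp_smul_ae_eq_zero _ hηcond)
    refine (condExp_congr_ae (.of_forall fun ω => ?_)).trans <|
      condExp_add_ae_eq_zero (((hmom r).sub integrable_condExp).smul θ₀)
        (condExp_smul_ae_eq_zero _ hcentred) <|
      condExp_add_ae_eq_zero ((hmix (r - 1)).smul (-(r : ℝ)))
        (condExp_smul_ae_eq_zero _ (hε_mul _ (hη_meas.pow_const _).stronglyMeasurable))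
        (condExp_mul_ae_eq_zero_of_stronglyMeasurable_right hc_meas
          (hε_int.add (hη_int.smul _)) hε_sub_η)
    simp only [hε_def, hη_def, Pi.add_apply, Pi.sub_apply, Pi.mul_apply, Pi.smul_apply, smul_eq_mul]
    ring
  · refine (condExp_congr_ae (.of_forall fun ω => ?_)).trans <|
      hε_mul _ (hη_meas.const_smul (-(r : ℝ))).stronglyMeasurable
    simp [hε_def, hη_def]

/-- First-order orthogonality of the PLR moment
`m(Z, θ, q, g, μ) = (Y − q − θ(T − g)) ((T − g)^r − E[η^r|X] − r(T − g)μ)`: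
the conditional expectations given `X` of its partial derivatives in `q`, `g` and `μ`,
evaluated at `(θ₀, q₀(X), g₀(X), E[η^(r−1)|X])`, vanish almost surely.  Here
`η = T − g₀(X)` and `ε = Y − θ₀ T − f₀(X)`. -/
theorem stmt8 {Ω β : Type*} [MeasurableSpace Ω] [MeasurableSpace β]
    (μ : Measure Ω) [IsProbabilityMeasure μ]
    (X : Ω → β) (T Y : Ω → ℝ) (hX : Measurable X) (hT : Measurable T) (hY : Measurable Y)
    (f₀ g₀ : β → ℝ) (hf₀ : Measurable f₀) (hg₀ : Measurable g₀)
    (θ₀ : ℝ) (r : ℕ) (hr : 0 < r)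
    (hεcond : μ[fun ω => Y ω - θ₀ * T ω - f₀ (X ω)
        | MeasurableSpace.comap (fun ω => (X ω, T ω)) inferInstance] =ᵐ[μ] 0)
    (hηcond : μ[fun ω => T ω - g₀ (X ω) | MeasurableSpace.comap X inferInstance] =ᵐ[μ] 0)
    (hmom : ∀ k : ℕ, Integrable (fun ω => (T ω - g₀ (X ω)) ^ k) μ)
    (hmix : ∀ k : ℕ, Integrable (fun ω => (Y ω - θ₀ * T ω - f₀ (X ω)) * (T ω - g₀ (X ω)) ^ k) μ) :
    -- ∂m/∂q at the truth
    (μ[fun ω =>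
        -((T ω - g₀ (X ω)) ^ r
          - (μ[fun ω' => (T ω' - g₀ (X ω')) ^ r | MeasurableSpace.comap X inferInstance]) ω
          - (r : ℝ) * (T ω - g₀ (X ω)) *
            (μ[fun ω' => (T ω' - g₀ (X ω')) ^ (r - 1)
                | MeasurableSpace.comap X inferInstance]) ω)
      | MeasurableSpace.comap X inferInstance] =ᵐ[μ] 0)
    ∧
    -- ∂m/∂g at the truth
    (μ[fun ω =>
        θ₀ * ((T ω - g₀ (X ω)) ^ r
          - (μ[fun ω' => (T ω' - g₀ (X ω')) ^ r | MeasurableSpace.comap X inferInstance]) ω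
          - (r : ℝ) * (T ω - g₀ (X ω)) *
            (μ[fun ω' => (T ω' - g₀ (X ω')) ^ (r - 1)
                | MeasurableSpace.comap X inferInstance]) ω)
        + (Y ω - θ₀ * T ω - f₀ (X ω)) *
            (-(r : ℝ) * (T ω - g₀ (X ω)) ^ (r - 1)
              + (r : ℝ) *
                (μ[fun ω' => (T ω' - g₀ (X ω')) ^ (r - 1)
                    | MeasurableSpace.comap X inferInstance]) ω)
      | MeasurableSpace.comap X inferInstance] =ᵐ[μ] 0)
    ∧
    -- ∂m/∂μ at the truth
    (μ[fun ω =>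
        (Y ω - θ₀ * T ω - f₀ (X ω)) * (-(r : ℝ) * (T ω - g₀ (X ω)))
      | MeasurableSpace.comap X inferInstance] =ᵐ[μ] 0) :=
  stmt8_general μ X T Y hX hT f₀ g₀ hg₀ θ₀ r hεcond hηcond hmom hmix
end

section
/- In the partially linear regression model, the moment m(Z, θ, q, g, μ) = (Y − q − θ(T − g))·((T − g)^r − E[η^r|X] − r(T − g)μ) satisfies second-order orthogonality: all second-order mixed partial derivatives of m with respect to (q, g, μ), evaluated at (θ₀, q₀(X), g₀(X), E[η^{r−1}|X]), have conditional expectation zero given X almost surely. -/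
/-!
With `η = T − g₀(X)` and `ε = Y − θ₀T − f₀(X)`, each second derivative of the moment at the
truth is a linear combination of three kinds of terms, all with zero conditional mean given `X`:
`ε · ηᵏ`, because `ηᵏ` is `σ(X, T)`-measurable and `E[ε | X, T] = 0` (pull-out and tower
property); the centred power `η^(r−1) − E[η^(r−1) | X]`, which is exactly why the nuisance `μ`
is evaluated at `E[η^(r−1) | X]`; and `η` itself, since `E[η | X] = 0`.
-/

open MeasureTheory ProbabilityTheory Filter

namespace MeasureTheory

variable {Ω : Type*} {m m' m₀ : MeasurableSpace Ω} {μ : Measure Ω} {f g H : Ω → ℝ}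

theorem condExp_mul_eq_zero_of_condExp_eq_zero (hm : m ≤ m') (hm' : m' ≤ m₀)
    [SigmaFinite (μ.trim hm')] (hg : StronglyMeasurable[m'] g)
    (hfg : Integrable (fun ω => f ω * g ω) μ) (hf : Integrable f μ) (hf0 : μ[f | m'] =ᵐ[μ] 0) :
    μ[fun ω => f ω * g ω | m] =ᵐ[μ] 0 :=
  calc μ[fun ω => f ω * g ω | m]
      =ᵐ[μ] μ[μ[f * g | m'] | m] := (condExp_condExp_of_le hm hm').symm
    _ =ᵐ[μ] μ[μ[f | m'] * g | m] :=
        condExp_congr_ae (condExp_mul_of_aestronglyMeasurable_right hg.aestronglyMeasurable hfg hf)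
    _ =ᵐ[μ] μ[0 | m] := condExp_congr_ae (by filter_upwards [hf0] with ω hω; simp [hω])
    _ = 0 := condExp_zero

theorem condExp_sub_condExp_eq_zero (hm : m ≤ m₀) [SigmaFinite (μ.trim hm)]
    (hf : Integrable f μ) : μ[f - μ[f | m] | m] =ᵐ[μ] 0 := by
  filter_upwards [condExp_sub hf integrable_condExp m, condExp_condExp_of_le le_rfl hm (f := f)]
    with ω hsub hidem
  rw [hsub, Pi.sub_apply, hidem, sub_self, Pi.zero_apply]

theorem condExp_eq_zero_of_eq_const_mul (c : ℝ) (hf0 : μ[f | m] =ᵐ[μ] 0)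
    (hH : ∀ ω, H ω = c * f ω) : μ[H | m] =ᵐ[μ] 0 := by
  rw [show H = c • f from funext hH]
  filter_upwards [condExp_smul c f m, hf0] with ω hsmul hω
  simp [hsmul, hω]

theorem condExp_eq_zero_of_eq_linear_comb (a b : ℝ) (hf : Integrable f μ) (hg : Integrable g μ)
    (hf0 : μ[f | m] =ᵐ[μ] 0) (hg0 : μ[g | m] =ᵐ[μ] 0) (hH : ∀ ω, H ω = a * f ω + b * g ω) :
    μ[H | m] =ᵐ[μ] 0 := by
  rw [show H = a • f + b • g from funext hH]
  filter_upwards [condExp_add (hf.smul a) (hg.smul b) m, condExp_smul a f m, condExp_smul b g m,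
    hf0, hg0] with ω hadd hsa hsb hω₁ hω₂
  simp [hadd, hsa, hsb, hω₁, hω₂]

end MeasureTheory

theorem stmt9_general {Ω β : Type*} [MeasurableSpace Ω] [MeasurableSpace β]
    (μ : Measure Ω) [IsProbabilityMeasure μ]
    (X : Ω → β) (T Y : Ω → ℝ) (hX : Measurable X) (hT : Measurable T)
    (f₀ g₀ : β → ℝ) (hg₀ : Measurable g₀)
    (θ₀ : ℝ) (r : ℕ)
    (hεcond : μ[fun ω => Y ω - θ₀ * T ω - f₀ (X ω)
        | MeasurableSpace.comap (fun ω => (X ω, T ω)) inferInstance] =ᵐ[μ] 0)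
    (hηcond : μ[fun ω => T ω - g₀ (X ω) | MeasurableSpace.comap X inferInstance] =ᵐ[μ] 0)
    (hmom : ∀ k : ℕ, Integrable (fun ω => (T ω - g₀ (X ω)) ^ k) μ)
    (hmix : ∀ k : ℕ, Integrable (fun ω => (Y ω - θ₀ * T ω - f₀ (X ω)) * (T ω - g₀ (X ω)) ^ k) μ) :
    -- ∂²m/∂q² ≡ 0
    (μ[fun _ => (0 : ℝ) | MeasurableSpace.comap X inferInstance] =ᵐ[μ] 0)
    ∧
    -- ∂²m/∂q∂g at the truth
    (μ[fun ω =>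
        (r : ℝ) * (T ω - g₀ (X ω)) ^ (r - 1)
          - (r : ℝ) * (μ[fun ω' => (T ω' - g₀ (X ω')) ^ (r - 1)
              | MeasurableSpace.comap X inferInstance]) ω
      | MeasurableSpace.comap X inferInstance] =ᵐ[μ] 0)
    ∧
    -- ∂²m/∂q∂μ at the truth
    (μ[fun ω => (r : ℝ) * (T ω - g₀ (X ω))
      | MeasurableSpace.comap X inferInstance] =ᵐ[μ] 0)
    ∧
    -- ∂²m/∂g² at the truth
    (μ[fun ω =>
        2 * θ₀ * (-(r : ℝ) * (T ω - g₀ (X ω)) ^ (r - 1)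
            + (r : ℝ) * (μ[fun ω' => (T ω' - g₀ (X ω')) ^ (r - 1)
                | MeasurableSpace.comap X inferInstance]) ω)
          + (Y ω - θ₀ * T ω - f₀ (X ω)) * ((r : ℝ) * ((r : ℝ) - 1) * (T ω - g₀ (X ω)) ^ (r - 2))
      | MeasurableSpace.comap X inferInstance] =ᵐ[μ] 0)
    ∧
    -- ∂²m/∂g∂μ at the truth
    (μ[fun ω =>
        -θ₀ * (r : ℝ) * (T ω - g₀ (X ω)) + (r : ℝ) * (Y ω - θ₀ * T ω - f₀ (X ω))
      | MeasurableSpace.comap X inferInstance] =ᵐ[μ] 0)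
    ∧
    -- ∂²m/∂μ² ≡ 0
    (μ[fun _ => (0 : ℝ) | MeasurableSpace.comap X inferInstance] =ᵐ[μ] 0) := by
  have hXT : Measurable[MeasurableSpace.comap (fun ω => (X ω, T ω)) inferInstance]
      (fun ω => (X ω, T ω)) := comap_measurable _
  have hη : ∀ k : ℕ, StronglyMeasurable[MeasurableSpace.comap (fun ω => (X ω, T ω)) inferInstance]
      (fun ω => (T ω - g₀ (X ω)) ^ k) := fun k =>
    ((measurable_snd.comp hXT).sub (hg₀.comp (measurable_fst.comp hXT))).pow_const k
      |>.stronglyMeasurable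
  have hεη : ∀ k : ℕ, μ[fun ω => (Y ω - θ₀ * T ω - f₀ (X ω)) * (T ω - g₀ (X ω)) ^ k
      | MeasurableSpace.comap X inferInstance] =ᵐ[μ] 0 := fun k =>
    condExp_mul_eq_zero_of_condExp_eq_zero (measurable_fst.comp hXT).comap_le
      (hX.prodMk hT).comap_le (hη k) (hmix k) (by simpa using hmix 0) hεcond
  have hcentred := condExp_sub_condExp_eq_zero hX.comap_le (hmom (r - 1))
  have hzero : μ[fun _ => (0 : ℝ) | MeasurableSpace.comap X inferInstance] = 0 := condExp_zero
  refine ⟨hzero ▸ .rfl, ?_, ?_, ?_, ?_, hzero ▸ .rfl⟩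
  · exact condExp_eq_zero_of_eq_const_mul r hcentred fun ω => by rw [Pi.sub_apply]; ring
  · exact condExp_eq_zero_of_eq_const_mul r hηcond fun ω => rfl
  · exact condExp_eq_zero_of_eq_linear_comb (-(2 * θ₀ * r)) (r * (r - 1))
      ((hmom _).sub integrable_condExp) (hmix (r - 2)) hcentred (hεη (r - 2)) fun ω => by
        rw [Pi.sub_apply]; ring
  · exact condExp_eq_zero_of_eq_linear_comb (-θ₀ * r) r (by simpa using hmom 1)
      (by simpa using hmix 0) hηcond (by simpa using hεη 0) fun ω => by ring

/-- Second-order orthogonality of the PLR moment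
`m(Z, θ, q, g, μ) = (Y − q − θ(T − g)) ((T − g)^r − E[η^r|X] − r(T − g)μ)`:
all second-order mixed partial derivatives in `(q, g, μ)`, evaluated at
`(θ₀, q₀(X), g₀(X), E[η^(r−1)|X])`, have conditional expectation zero given `X` a.s.
Here `η = T − g₀(X)`, `ε = Y − θ₀ T − f₀(X)`; the `qq` and `μμ` derivatives vanish
identically, and the others are listed explicitly. -/
theorem stmt9 {Ω β : Type*} [MeasurableSpace Ω] [MeasurableSpace β]
    (μ : Measure Ω) [IsProbabilityMeasure μ]
    (X : Ω → β) (T Y : Ω → ℝ) (hX : Measurable X) (hT : Measurable T) (hY : Measurable Y)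
    (f₀ g₀ : β → ℝ) (hf₀ : Measurable f₀) (hg₀ : Measurable g₀)
    (θ₀ : ℝ) (r : ℕ) (hr : 0 < r)
    (hεcond : μ[fun ω => Y ω - θ₀ * T ω - f₀ (X ω)
        | MeasurableSpace.comap (fun ω => (X ω, T ω)) inferInstance] =ᵐ[μ] 0)
    (hηcond : μ[fun ω => T ω - g₀ (X ω) | MeasurableSpace.comap X inferInstance] =ᵐ[μ] 0)
    (hmom : ∀ k : ℕ, Integrable (fun ω => (T ω - g₀ (X ω)) ^ k) μ)
    (hmix : ∀ k : ℕ, Integrable (fun ω => (Y ω - θ₀ * T ω - f₀ (X ω)) * (T ω - g₀ (X ω)) ^ k) μ) :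
    -- ∂²m/∂q² ≡ 0
    (μ[fun _ => (0 : ℝ) | MeasurableSpace.comap X inferInstance] =ᵐ[μ] 0)
    ∧
    -- ∂²m/∂q∂g at the truth
    (μ[fun ω =>
        (r : ℝ) * (T ω - g₀ (X ω)) ^ (r - 1)
          - (r : ℝ) * (μ[fun ω' => (T ω' - g₀ (X ω')) ^ (r - 1)
              | MeasurableSpace.comap X inferInstance]) ω
      | MeasurableSpace.comap X inferInstance] =ᵐ[μ] 0)
    ∧
    -- ∂²m/∂q∂μ at the truth
    (μ[fun ω => (r : ℝ) * (T ω - g₀ (X ω))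
      | MeasurableSpace.comap X inferInstance] =ᵐ[μ] 0)
    ∧
    -- ∂²m/∂g² at the truth
    (μ[fun ω =>
        2 * θ₀ * (-(r : ℝ) * (T ω - g₀ (X ω)) ^ (r - 1)
            + (r : ℝ) * (μ[fun ω' => (T ω' - g₀ (X ω')) ^ (r - 1)
                | MeasurableSpace.comap X inferInstance]) ω)
          + (Y ω - θ₀ * T ω - f₀ (X ω)) * ((r : ℝ) * ((r : ℝ) - 1) * (T ω - g₀ (X ω)) ^ (r - 2))
      | MeasurableSpace.comap X inferInstance] =ᵐ[μ] 0)
    ∧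
    -- ∂²m/∂g∂μ at the truth
    (μ[fun ω =>
        -θ₀ * (r : ℝ) * (T ω - g₀ (X ω)) + (r : ℝ) * (Y ω - θ₀ * T ω - f₀ (X ω))
      | MeasurableSpace.comap X inferInstance] =ᵐ[μ] 0)
    ∧
    -- ∂²m/∂μ² ≡ 0
    (μ[fun _ => (0 : ℝ) | MeasurableSpace.comap X inferInstance] =ᵐ[μ] 0) :=
  stmt9_general μ X T Y hX hT f₀ g₀ hg₀ θ₀ r hεcond hηcond hmom hmix
end

section
/- Let α ∈ ℕ^ℓ with ‖α‖₁ = k+1 and suppose for each i there is κ_i ∈ (0, 2] with (1/‖α‖₁)∑_i α_i/κ_i ≥ 1/2 and n^{1/(κ_i‖α‖₁)}·‖ĥ_i − h_{0,i}‖_{2‖α‖₁} → 0 in probability. Then √n · ∏_{i=1}^ℓ ‖ĥ_i − h_{0,i}‖_{2‖α‖₁}^{α_i} → 0 in probability. -/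
open MeasureTheory Filter Finset

/-! Write `Yᵢ = n^{eᵢ} |Aᵢ|` with `eᵢ = 1 / (κᵢ (k+1))`, so that `∑ eᵢ αᵢ ≥ 1/2`. Then
`√n ∏ |Aᵢ|^{αᵢ} ≤ n^{∑ eᵢ αᵢ} ∏ |Aᵢ|^{αᵢ} = ∏ Yᵢ^{αᵢ}`, and once every `Yᵢ` is below some
`δ ≤ 1` this is at most `δ^{∑ αᵢ} ≤ δ`. Hence the event `√n ∏ |Aᵢ|^{αᵢ} ≥ ε` is covered by the
finitely many events `Yᵢ ≥ δ`, whose probabilities tend to zero. -/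

theorem tendstoInMeasure_zero_of_forall_norm_lt {Ω ι β E F : Type*} [MeasurableSpace Ω]
    {μ : Measure Ω} [Fintype ι] {l : Filter β} [SeminormedAddCommGroup E]
    [SeminormedAddCommGroup F] {f : ι → β → Ω → E} {g : β → Ω → F}
    (hf : ∀ i, TendstoInMeasure μ (f i) l fun _ => 0)
    (hg : ∀ ε > 0, ∃ δ > 0, ∀ n ω, (∀ i, ‖f i n ω‖ < δ) → ‖g n ω‖ < ε) :
    TendstoInMeasure μ g l fun _ => 0 := by
  simp only [tendstoInMeasure_iff_norm, sub_zero] at hf ⊢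
  intro ε hε
  obtain ⟨δ, hδ, hfg⟩ := hg ε hε
  have hcover : ∀ n, {ω | ε ≤ ‖g n ω‖} ⊆ ⋃ i, {ω | δ ≤ ‖f i n ω‖} := by
    intro n ω hω
    by_contra hnot
    simp only [Set.mem_iUnion, Set.mem_ofPred_eq, not_exists, not_le] at hω hnot
    exact (hfg n ω hnot).not_ge hω
  refine tendsto_of_tendsto_of_tendsto_of_le_of_le tendsto_const_nhds
    (by simpa using tendsto_finsetSum univ fun i _ => hf i δ hδ) (fun _ => zero_le)
    fun n => (measure_mono (hcover n)).trans (measure_iUnion_fintype_le _ _)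

theorem Real.sqrt_mul_prod_pow_le_prod_rpow_mul_pow {ι : Type*} (s : Finset ι) (n : ℕ)
    (e a : ι → ℝ) (α : ι → ℕ) (ha : ∀ i ∈ s, 0 ≤ a i) (he : 1 / 2 ≤ ∑ i ∈ s, e i * α i) :
    √n * ∏ i ∈ s, a i ^ α i ≤ ∏ i ∈ s, ((n : ℝ) ^ e i * a i) ^ α i := by
  rcases n.eq_zero_or_pos with rfl | hn
  · rw [Nat.cast_zero, Real.sqrt_zero, zero_mul]
    exact prod_nonneg fun i hi => pow_nonneg (mul_nonneg (Real.rpow_nonneg le_rfl _) (ha i hi)) _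
  have hprod : ∏ i ∈ s, ((n : ℝ) ^ e i * a i) ^ α i
      = (n : ℝ) ^ (∑ i ∈ s, e i * α i) * ∏ i ∈ s, a i ^ α i := by
    simp_rw [mul_pow, prod_mul_distrib, ← Real.rpow_mul_natCast (Nat.cast_nonneg n),
      Real.rpow_sum_of_pos (Nat.cast_pos.mpr hn)]
  rw [hprod, Real.sqrt_eq_rpow]
  gcongr
  · exact prod_nonneg fun i hi => pow_nonneg (ha i hi) _
  · exact_mod_cast hn

theorem prod_pow_le_of_le_of_le_one {ι R : Type*} [CommSemiring R] [PartialOrder R]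
    [IsOrderedRing R] (s : Finset ι) (y : ι → R) (α : ι → ℕ) {δ : R} (hy₀ : ∀ i ∈ s, 0 ≤ y i)
    (hy : ∀ i ∈ s, y i ≤ δ) (hδ₀ : 0 ≤ δ) (hδ₁ : δ ≤ 1) (hα : ∑ i ∈ s, α i ≠ 0) :
    ∏ i ∈ s, y i ^ α i ≤ δ :=
  calc ∏ i ∈ s, y i ^ α i ≤ ∏ i ∈ s, δ ^ α i :=
        prod_le_prod (fun i hi => pow_nonneg (hy₀ i hi) _)
          fun i hi => pow_le_pow_left₀ (hy₀ i hi) (hy i hi) _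
    _ = δ ^ ∑ i ∈ s, α i := prod_pow_eq_pow_sum s α δ
    _ ≤ δ := pow_le_of_le_one hδ₀ hδ₁ hα

theorem stmt13_general {Ω : Type*} [MeasurableSpace Ω] (μ : Measure Ω)
    {ℓ : ℕ} (α : Fin ℓ → ℕ) (k : ℕ) (hα : ∑ i, α i = k + 1)
    (A : Fin ℓ → ℕ → Ω → ℝ)
    (κ : Fin ℓ → ℝ)
    (hsum : (1 / ((k : ℝ) + 1)) * ∑ i, (α i : ℝ) / κ i ≥ 1 / 2)
    (hconv : ∀ i, TendstoInMeasure μ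
      (fun (n : ℕ) ω => (n : ℝ) ^ ((1 : ℝ) / (κ i * ((k : ℝ) + 1))) * A i n ω) atTop
      (fun _ => (0 : ℝ))) :
    TendstoInMeasure μ (fun (n : ℕ) ω => Real.sqrt n * ∏ i, A i n ω ^ (α i)) atTop
      (fun _ => (0 : ℝ)) := by
  set e : Fin ℓ → ℝ := fun i => 1 / (κ i * ((k : ℝ) + 1))
  have he : 1 / 2 ≤ ∑ i, e i * α i :=
    calc 1 / 2 ≤ (1 / ((k : ℝ) + 1)) * ∑ i, (α i : ℝ) / κ i := hsum
      _ = ∑ i, e i * α i := by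
        rw [mul_sum]
        exact sum_congr rfl fun i _ => by simp only [e, one_div, mul_inv]; ring
  have hα₀ : ∑ i, α i ≠ 0 := by rw [hα]; exact k.succ_ne_zero
  refine tendstoInMeasure_zero_of_forall_norm_lt hconv fun ε hε =>
    ⟨min 1 (ε / 2), by positivity, fun n ω hsmall => ?_⟩
  have hnorm : ∀ i, ‖(n : ℝ) ^ e i * A i n ω‖ = (n : ℝ) ^ e i * |A i n ω| := fun i => by
    rw [norm_mul, Real.norm_of_nonneg (Real.rpow_nonneg n.cast_nonneg _), Real.norm_eq_abs]
  calc ‖√n * ∏ i, A i n ω ^ α i‖ = √n * ∏ i, |A i n ω| ^ α i := by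
        rw [norm_mul, norm_prod, Real.norm_of_nonneg (Real.sqrt_nonneg _)]
        simp only [norm_pow, Real.norm_eq_abs]
    _ ≤ ∏ i, ((n : ℝ) ^ e i * |A i n ω|) ^ α i :=
        Real.sqrt_mul_prod_pow_le_prod_rpow_mul_pow _ n e _ α (fun i _ => abs_nonneg _) he
    _ ≤ min 1 (ε / 2) :=
        prod_pow_le_of_le_of_le_one _ _ α (fun i _ => hnorm i ▸ norm_nonneg _)
          (fun i _ => (hnorm i ▸ hsmall i).le) (by positivity) (min_le_left _ _) hα₀
    _ < ε := (min_le_right _ _).trans_lt (half_lt_self hε)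

/-- If `‖α‖₁ = k+1`, each `κ i ∈ (0,2]` with `(1/‖α‖₁) ∑ α i/κ i ≥ 1/2`, and for each `i`
`n^(1/(κ i ‖α‖₁)) ‖ĥ_i − h_{0,i}‖_{2‖α‖₁} → 0` in probability (`A i n` denoting the random
norm `‖ĥ_i − h_{0,i}‖_{2‖α‖₁}` at sample size `n`), then
`√n ∏ i ‖ĥ_i − h_{0,i}‖_{2‖α‖₁}^(α i) → 0` in probability. -/
theorem stmt13 {Ω : Type*} [MeasurableSpace Ω] (μ : Measure Ω) [IsProbabilityMeasure μ]
    {ℓ : ℕ} (α : Fin ℓ → ℕ) (k : ℕ) (hα : ∑ i, α i = k + 1)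
    (A : Fin ℓ → ℕ → Ω → ℝ) (hA : ∀ i n ω, 0 ≤ A i n ω)
    (hAmeas : ∀ i n, Measurable (A i n))
    (κ : Fin ℓ → ℝ) (hκ : ∀ i, κ i ∈ Set.Ioc (0 : ℝ) 2)
    (hsum : (1 / ((k : ℝ) + 1)) * ∑ i, (α i : ℝ) / κ i ≥ 1 / 2)
    (hconv : ∀ i, TendstoInMeasure μ
      (fun (n : ℕ) ω => (n : ℝ) ^ ((1 : ℝ) / (κ i * ((k : ℝ) + 1))) * A i n ω) atTop
      (fun _ => (0 : ℝ))) :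
    TendstoInMeasure μ (fun (n : ℕ) ω => Real.sqrt n * ∏ i, A i n ω ^ (α i)) atTop
      (fun _ => (0 : ℝ)) :=
  stmt13_general μ α k hα A κ hsum hconv
end
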